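/- Let d_A, d_B ≥ 1 and let |ψ⟩, |φ⟩ ∈ ℂ^{d_A}⊗ℂ^{d_B} be unit vectors, with reduced density matrices ρ = Tr_B(|ψ⟩⟨ψ|) and σ = Tr_B(|φ⟩⟨φ|). Let K = Tr_A(|ψ⟩⟨φ|) ∈ M_{d_B}(ℂ), fix a singular value decomposition K = U·Σ·V†, and set W = U·sgn(Σ)·V†, where sgn is applied entrywise to the diagonal of Σ. Then W†W is an orthogonal projection (i.e., W is a partial isometry), and ⟨ψ|(I_{d_A}⊗W)|φ⟩ = F(ρ,σ). -/

import Mathlib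

open scoped Matrix Kronecker ComplexOrder

/-- The operator (spectral) norm of a square complex matrix. -/
noncomputable def opNorm {n : Type*} [Fintype n] [DecidableEq n] (A : Matrix n n ℂ) : ℝ :=
  ‖Matrix.toEuclideanCLM (𝕜 := ℂ) A‖

/-- The square root of a positive semidefinite matrix (the removed `Matrix.PosSemidef.sqrt`,
with its old definition). -/
noncomputable def psdSqrt {n : Type*} [Fintype n] [DecidableEq n] {A : Matrix n n ℂ}
    (hA : A.PosSemidef) : Matrix n n ℂ :=
  hA.1.eigenvectorUnitary.1 * Matrix.diagonal ((↑) ∘ (√·) ∘ hA.1.eigenvalues) *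
    (star hA.1.eigenvectorUnitary : Matrix n n ℂ)

/-- The trace norm `‖A‖₁ = Tr √(Aᴴ A)` of a square complex matrix. -/
noncomputable def traceNorm {n : Type*} [Fintype n] [DecidableEq n] (A : Matrix n n ℂ) : ℝ :=
  ((psdSqrt (Matrix.posSemidef_conjTranspose_mul_self A)).trace).re

/-- The (square-root) fidelity `F(ρ,σ) = ‖√ρ √σ‖₁` of positive semidefinite matrices. -/
noncomputable def fidelity {n : Type*} [Fintype n] [DecidableEq n] {ρ σ : Matrix n n ℂ}
    (hρ : ρ.PosSemidef) (hσ : σ.PosSemidef) : ℝ :=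
  traceNorm (psdSqrt hρ * psdSqrt hσ)

/-- Functional calculus for a Hermitian matrix: `f(A) = Σ_i f(λ_i) |v_i⟩⟨v_i|`. -/
noncomputable def matFun {n : Type*} [Fintype n] [DecidableEq n] {A : Matrix n n ℂ}
    (hA : A.IsHermitian) (f : ℝ → ℝ) : Matrix n n ℂ :=
  (hA.eigenvectorUnitary : Matrix n n ℂ) *
    Matrix.diagonal (fun i => (f (hA.eigenvalues i) : ℂ)) *
    (star (hA.eigenvectorUnitary : Matrix n n ℂ))

/-- Partial trace over the first tensor factor. -/
noncomputable def ptraceA {a b : Type*} [Fintype a] (X : Matrix (a × b) (a × b) ℂ) :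
    Matrix b b ℂ :=
  Matrix.of fun i j => ∑ k, X (k, i) (k, j)

/-- Partial trace over the second tensor factor. -/
noncomputable def ptraceB {a b : Type*} [Fintype b] (X : Matrix (a × b) (a × b) ℂ) :
    Matrix a a ℂ :=
  Matrix.of fun i j => ∑ k, X (i, k) (j, k)

/-- The outer product `|ψ⟩⟨φ|`. -/
def outer {a : Type*} (ψ φ : a → ℂ) : Matrix a a ℂ :=
  Matrix.of fun i j => ψ i * (starRingEnd ℂ) (φ j)

/-- The Euclidean norm of a finitely supported complex vector. -/
noncomputable def evnorm {a : Type*} [Fintype a] (v : a → ℂ) : ℝ :=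
  Real.sqrt (∑ i, ‖v i‖ ^ 2)

/-!
Write `φ` as the `d_A × d_B` matrix `Φ`. Then `σ = Φ Φ†`, `K† K = (Φ† ρ Φ)ᵀ`, and the left-hand
side is `Tr (K† W) = Σ sᵢ sgn sᵢ = Σ sᵢ = Tr √(K† K)`. Because `X† X` and `X X†` have the same
nonzero spectrum, `Tr √(X† X) = Tr √(X X†)` for every rectangular `X`; applied to `X = √ρ Φ` and
then `X = √σ √ρ` this gives `Tr √(Φ† ρ Φ) = Tr √(√ρ σ √ρ) = Tr √(√σ ρ √σ) = ‖√ρ √σ‖₁`.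
-/

open scoped MatrixOrder
open Polynomial

namespace Matrix

lemma ofReal_re_trace {n : Type*} [Fintype n] {A : Matrix n n ℂ} (hA : A.PosSemidef) :
    (A.trace.re : ℂ) = A.trace :=
  Complex.ext rfl (Complex.nonneg_iff.mp hA.trace_nonneg).2

variable {m n : Type*} [Fintype m] [DecidableEq m] [Fintype n] [DecidableEq n]

lemma psdSqrt_eq_cfcSqrt {A : Matrix n n ℂ} (hA : A.PosSemidef) : psdSqrt hA = CFC.sqrt A := by
  rw [CFC.sqrt_eq_real_sqrt A hA.nonneg, cfcₙ_eq_cfc, hA.1.cfc_eq, IsHermitian.cfc,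
    Unitary.conjStarAlgAut_apply]
  rfl

lemma conjTranspose_sqrt (A : Matrix n n ℂ) : (CFC.sqrt A)ᴴ = CFC.sqrt A :=
  (CFC.sqrt_nonneg A).isSelfAdjoint.star_eq

lemma ofReal_traceNorm (A : Matrix n n ℂ) : (traceNorm A : ℂ) = (CFC.sqrt (Aᴴ * A)).trace := by
  rw [traceNorm, psdSqrt_eq_cfcSqrt]
  exact ofReal_re_trace (nonneg_iff_posSemidef.mp (CFC.sqrt_nonneg (Aᴴ * A)))

lemma ofReal_fidelity {ρ σ : Matrix n n ℂ} (hρ : ρ.PosSemidef) (hσ : σ.PosSemidef) :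
    (fidelity hρ hσ : ℂ) = (CFC.sqrt (CFC.sqrt σ * ρ * CFC.sqrt σ)).trace := by
  rw [fidelity, ofReal_traceNorm, psdSqrt_eq_cfcSqrt, psdSqrt_eq_cfcSqrt, conjTranspose_mul,
    conjTranspose_sqrt, conjTranspose_sqrt, Matrix.mul_assoc, ← Matrix.mul_assoc (CFC.sqrt ρ),
    CFC.sqrt_mul_sqrt_self ρ hρ.nonneg, Matrix.mul_assoc]

lemma sqrt_transpose {A : Matrix n n ℂ} (hA : A.PosSemidef) :
    CFC.sqrt Aᵀ = (CFC.sqrt A)ᵀ := by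
  refine CFC.sqrt_unique ?_ (nonneg_iff_posSemidef.mp (CFC.sqrt_nonneg A)).transpose.nonneg
  rw [← transpose_mul, CFC.sqrt_mul_sqrt_self A hA.nonneg]

lemma mul_aeval_conjTranspose_mul_self (A : Matrix m n ℂ) (p : ℝ[X]) :
    A * aeval (Aᴴ * A) p = aeval (A * Aᴴ) p * A := by
  induction p using Polynomial.induction_on' with
  | add p q hp hq => simp only [map_add, Matrix.mul_add, Matrix.add_mul, hp, hq]
  | monomial k a =>
    have hpow : A * (Aᴴ * A) ^ k = (A * Aᴴ) ^ k * A := by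
      induction k with
      | zero => simp
      | succ k ih => rw [pow_succ, pow_succ, ← Matrix.mul_assoc, ih]; simp only [Matrix.mul_assoc]
    simp only [aeval_monomial, Algebra.algebraMap_eq_smul_one, smul_one_mul, Matrix.mul_smul,
      Matrix.smul_mul, hpow]

/-- Since `f 0 = 0`, `f` agrees on both spectra with a polynomial `X * q`, and
`Tr (Aᴴ A q(Aᴴ A)) = Tr (A q(Aᴴ A) Aᴴ) = Tr (q(A Aᴴ) A Aᴴ)`. -/
lemma trace_cfc_conjTranspose_mul_self (A : Matrix m n ℂ) {f : ℝ → ℝ} (hf : f 0 = 0) :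
    (cfc f (Aᴴ * A)).trace = (cfc f (A * Aᴴ)).trace := by
  classical
  set T : Finset ℝ := insert 0 ((finite_real_spectrum (A := Aᴴ * A)).toFinset ∪
    (finite_real_spectrum (A := A * Aᴴ)).toFinset)
  obtain ⟨p, hp⟩ : ∃ p : ℝ[X], ∀ x ∈ T, p.eval x = f x := ⟨Lagrange.interpolate T id f,
    fun x hx => Lagrange.eval_interpolate_at_node f Function.injective_id.injOn hx⟩
  obtain ⟨q, hq⟩ : X ∣ p := X_dvd_iff.mpr <| by
    rw [coeff_zero_eq_eval_zero, hp 0 (Finset.mem_insert_self _ _), hf]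
  have h₁ : cfc f (Aᴴ * A) = aeval (Aᴴ * A) p := by
    have : IsSelfAdjoint (Aᴴ * A) := isHermitian_conjTranspose_mul_self A
    rw [← cfc_polynomial p (Aᴴ * A), cfc_congr fun x hx => (hp x (by simp [T, hx])).symm]
  have h₂ : cfc f (A * Aᴴ) = aeval (A * Aᴴ) p := by
    have : IsSelfAdjoint (A * Aᴴ) := isHermitian_mul_conjTranspose_self A
    rw [← cfc_polynomial p (A * Aᴴ), cfc_congr fun x hx => (hp x (by simp [T, hx])).symm]
  rw [h₁, h₂, hq, map_mul, map_mul, aeval_X, aeval_X, Matrix.mul_assoc,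
    mul_aeval_conjTranspose_mul_self, ← Matrix.mul_assoc, trace_mul_comm, ← Matrix.mul_assoc,
    trace_mul_comm]

lemma trace_sqrt_conjTranspose_mul_self (A : Matrix m n ℂ) :
    (CFC.sqrt (Aᴴ * A)).trace = (CFC.sqrt (A * Aᴴ)).trace := by
  rw [CFC.sqrt_eq_real_sqrt (Aᴴ * A) (posSemidef_conjTranspose_mul_self A).nonneg,
    CFC.sqrt_eq_real_sqrt (A * Aᴴ) (posSemidef_self_mul_conjTranspose A).nonneg, cfcₙ_eq_cfc,
    cfcₙ_eq_cfc, trace_cfc_conjTranspose_mul_self A Real.sqrt_zero]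

lemma trace_sqrt_conjTranspose_mul_mul {P : Matrix m m ℂ} (hP : P.PosSemidef) (B : Matrix m n ℂ) :
    (CFC.sqrt (Bᴴ * P * B)).trace = (CFC.sqrt (CFC.sqrt P * (B * Bᴴ) * CFC.sqrt P)).trace := by
  convert trace_sqrt_conjTranspose_mul_self (CFC.sqrt P * B) using 3
  · simp only [conjTranspose_mul, conjTranspose_sqrt, Matrix.mul_assoc]
    rw [← Matrix.mul_assoc (CFC.sqrt P) (CFC.sqrt P), CFC.sqrt_mul_sqrt_self P hP.nonneg]
  · simp only [conjTranspose_mul, conjTranspose_sqrt, Matrix.mul_assoc]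

lemma conjTranspose_svd_mul_svd {U : Matrix n n ℂ} (hU : U ∈ unitaryGroup n ℂ)
    (V : Matrix n n ℂ) (d e : n → ℝ) :
    (U * diagonal (fun i => (d i : ℂ)) * Vᴴ)ᴴ * (U * diagonal (fun i => (e i : ℂ)) * Vᴴ) =
      V * diagonal (fun i => ((d i * e i : ℝ) : ℂ)) * Vᴴ := by
  have hUU : Uᴴ * U = 1 := mem_unitaryGroup_iff'.mp hU
  simp only [conjTranspose_mul, conjTranspose_conjTranspose, diagonal_conjTranspose, Pi.star_def,
    Complex.star_def, Complex.conj_ofReal, Matrix.mul_assoc]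
  rw [← Matrix.mul_assoc Uᴴ, hUU, Matrix.one_mul, ← Matrix.mul_assoc (diagonal _),
    diagonal_mul_diagonal]
  push_cast
  rfl

lemma unitary_conj_diagonal_mul_self {V : Matrix n n ℂ} (hV : V ∈ unitaryGroup n ℂ) (d : n → ℝ) :
    V * diagonal (fun i => (d i : ℂ)) * Vᴴ * (V * diagonal (fun i => (d i : ℂ)) * Vᴴ) =
      V * diagonal (fun i => ((d i * d i : ℝ) : ℂ)) * Vᴴ := by
  have hself : (V * diagonal (fun i => (d i : ℂ)) * Vᴴ)ᴴ =
      V * diagonal (fun i => (d i : ℂ)) * Vᴴ := by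
    simp [conjTranspose_mul, Matrix.mul_assoc, Pi.star_def]
  rw [← conjTranspose_svd_mul_svd hV, hself]

lemma trace_unitary_conj_diagonal {V : Matrix n n ℂ} (hV : V ∈ unitaryGroup n ℂ) (d : n → ℂ) :
    (V * diagonal d * Vᴴ).trace = ∑ i, d i := by
  have hVV : Vᴴ * V = 1 := mem_unitaryGroup_iff'.mp hV
  rw [trace_mul_comm, ← Matrix.mul_assoc, hVV, Matrix.one_mul, trace_diagonal]

lemma sqrt_conjTranspose_svd_mul_self {U V : Matrix n n ℂ} (hU : U ∈ unitaryGroup n ℂ)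
    (hV : V ∈ unitaryGroup n ℂ) {s : n → ℝ} (hs : ∀ i, 0 ≤ s i) :
    CFC.sqrt ((U * diagonal (fun i => (s i : ℂ)) * Vᴴ)ᴴ *
        (U * diagonal (fun i => (s i : ℂ)) * Vᴴ)) =
      V * diagonal (fun i => (s i : ℂ)) * Vᴴ := by
  refine CFC.sqrt_unique ?_ (PosSemidef.nonneg ?_)
  · rw [unitary_conj_diagonal_mul_self hV, conjTranspose_svd_mul_svd hU]
  · exact (posSemidef_diagonal_iff.mpr fun i =>
      Complex.zero_le_real.mpr (hs i)).mul_mul_conjTranspose_same V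

lemma isIdempotentElem_conjTranspose_svd_sign_mul_self {U V : Matrix n n ℂ}
    (hU : U ∈ unitaryGroup n ℂ) (hV : V ∈ unitaryGroup n ℂ) (s : n → ℝ) :
    IsIdempotentElem ((U * diagonal (fun i => (Real.sign (s i) : ℂ)) * Vᴴ)ᴴ *
      (U * diagonal (fun i => (Real.sign (s i) : ℂ)) * Vᴴ)) := by
  have hsign : ∀ x : ℝ, Real.sign x * Real.sign x * (Real.sign x * Real.sign x) =
      Real.sign x * Real.sign x := fun x => by
    rcases Real.sign_apply_eq x with h | h | h <;> norm_num [h]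
  rw [IsIdempotentElem, conjTranspose_svd_mul_svd hU V (fun i => Real.sign (s i)),
    unitary_conj_diagonal_mul_self hV]
  simp only [hsign]

lemma trace_conjTranspose_svd_mul_svd_sign {U V : Matrix n n ℂ} (hU : U ∈ unitaryGroup n ℂ)
    (hV : V ∈ unitaryGroup n ℂ) {s : n → ℝ} (hs : ∀ i, 0 ≤ s i) :
    ((U * diagonal (fun i => (s i : ℂ)) * Vᴴ)ᴴ *
        (U * diagonal (fun i => (Real.sign (s i) : ℂ)) * Vᴴ)).trace =
      (CFC.sqrt ((U * diagonal (fun i => (s i : ℂ)) * Vᴴ)ᴴ *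
        (U * diagonal (fun i => (s i : ℂ)) * Vᴴ))).trace := by
  have hs_sign : ∀ i, s i * Real.sign (s i) = s i := fun i => by
    rcases (hs i).eq_or_lt with h | h
    · rw [← h, zero_mul]
    · rw [Real.sign_of_pos h, mul_one]
  rw [conjTranspose_svd_mul_svd hU V s (fun i => Real.sign (s i)),
    sqrt_conjTranspose_svd_mul_self hU hV hs, trace_unitary_conj_diagonal hV,
    trace_unitary_conj_diagonal hV]
  simp only [hs_sign]

end Matrix

section PartialTrace

open Matrix

variable {a b : Type*}

lemma ptraceA_outer [Fintype a] (ψ φ : a × b → ℂ) :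
    ptraceA (outer ψ φ) = ((of (Function.curry φ))ᴴ * of (Function.curry ψ))ᵀ := by
  ext i j
  simp [ptraceA, outer, mul_apply, mul_comm]

lemma ptraceB_outer [Fintype b] (ψ φ : a × b → ℂ) :
    ptraceB (outer ψ φ) = of (Function.curry ψ) * (of (Function.curry φ))ᴴ := by
  ext i j
  simp [ptraceB, outer, mul_apply]

lemma conjTranspose_ptraceA_outer_mul_self [Fintype a] [Fintype b] (ψ φ : a × b → ℂ) :
    (ptraceA (outer ψ φ))ᴴ * ptraceA (outer ψ φ) =
      ((of (Function.curry φ))ᴴ * ptraceB (outer ψ ψ) * of (Function.curry φ))ᵀ := by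
  rw [ptraceA_outer, ptraceB_outer, conjTranspose_transpose_eq_transpose_conjTranspose,
    ← transpose_mul, conjTranspose_mul, conjTranspose_conjTranspose]
  simp only [Matrix.mul_assoc]

lemma dotProduct_one_kronecker_mulVec [Fintype a] [DecidableEq a] [Fintype b]
    (ψ φ : a × b → ℂ) (W : Matrix b b ℂ) :
    star ψ ⬝ᵥ (((1 : Matrix a a ℂ) ⊗ₖ W) *ᵥ φ) = ((ptraceA (outer ψ φ))ᴴ * W).trace := by
  simp only [dotProduct, Pi.star_apply, RCLike.star_def, mulVec, kroneckerMap_apply, one_apply,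
    ite_mul, one_mul, zero_mul, Fintype.sum_prod_type, Finset.sum_ite_irrel,
    Finset.sum_const_zero, Finset.sum_ite_eq, Finset.mem_univ, ↓reduceIte, Finset.mul_sum, trace,
    ptraceA, outer, of_apply, diag_apply, mul_apply, conjTranspose_apply, star_sum, star_mul',
    RingHomCompTriple.comp_apply, RingHom.id_apply, Finset.sum_mul]
  rw [Finset.sum_comm]
  refine (Finset.sum_congr rfl fun _ _ => Finset.sum_comm).trans (Finset.sum_comm.trans ?_)
  exact Finset.sum_congr rfl fun _ _ => Finset.sum_congr rfl fun _ _ =>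
    Finset.sum_congr rfl fun _ _ => by ring

end PartialTrace

theorem uhlmann_explicit_general (dA dB : ℕ)
    (ψ φ : Fin dA × Fin dB → ℂ)
    (ρ σ : Matrix (Fin dA) (Fin dA) ℂ)
    (hρdef : ρ = ptraceB (outer ψ ψ)) (hσdef : σ = ptraceB (outer φ φ))
    (K : Matrix (Fin dB) (Fin dB) ℂ) (hKdef : K = ptraceA (outer ψ φ))
    (U V : Matrix (Fin dB) (Fin dB) ℂ)
    (hU : U ∈ Matrix.unitaryGroup (Fin dB) ℂ) (hV : V ∈ Matrix.unitaryGroup (Fin dB) ℂ)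
    (s : Fin dB → ℝ) (hs : ∀ i, 0 ≤ s i)
    (hSVD : K = U * Matrix.diagonal (fun i => (s i : ℂ)) * Vᴴ)
    (W : Matrix (Fin dB) (Fin dB) ℂ)
    (hW : W = U * Matrix.diagonal (fun i => (Real.sign (s i) : ℂ)) * Vᴴ) :
    (Wᴴ * W) * (Wᴴ * W) = Wᴴ * W ∧ (Wᴴ * W).IsHermitian ∧
      ∀ (hρ : ρ.PosSemidef) (hσ : σ.PosSemidef),
        star ψ ⬝ᵥ (((1 : Matrix (Fin dA) (Fin dA) ℂ) ⊗ₖ W) *ᵥ φ) = (fidelity hρ hσ : ℂ) := by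
  refine ⟨hW ▸ Matrix.isIdempotentElem_conjTranspose_svd_sign_mul_self hU hV s,
    Matrix.isHermitian_conjTranspose_mul_self W, fun hρ hσ => ?_⟩
  set Φ := Matrix.of (Function.curry φ)
  have hKK : Kᴴ * K = (Φᴴ * ρ * Φ)ᵀ := by
    rw [hKdef, hρdef, conjTranspose_ptraceA_outer_mul_self]
  calc star ψ ⬝ᵥ ((1 ⊗ₖ W) *ᵥ φ) = (Kᴴ * W).trace := by
        rw [dotProduct_one_kronecker_mulVec, hKdef]
    _ = (CFC.sqrt (Kᴴ * K)).trace := by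
        rw [hW, hSVD]; exact Matrix.trace_conjTranspose_svd_mul_svd_sign hU hV hs
    _ = (CFC.sqrt (Φᴴ * ρ * Φ)).trace := by
        rw [hKK, Matrix.sqrt_transpose (hρ.conjTranspose_mul_mul_same Φ), Matrix.trace_transpose]
    _ = (CFC.sqrt (CFC.sqrt ρ * σ * CFC.sqrt ρ)).trace := by
        rw [Matrix.trace_sqrt_conjTranspose_mul_mul hρ, hσdef, ptraceB_outer]
    _ = (CFC.sqrt (CFC.sqrt σ * ρ * CFC.sqrt σ)).trace := by
        simpa only [Matrix.conjTranspose_sqrt, CFC.sqrt_mul_sqrt_self ρ hρ.nonneg] using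
          Matrix.trace_sqrt_conjTranspose_mul_mul hσ (CFC.sqrt ρ)
    _ = fidelity hρ hσ := (Matrix.ofReal_fidelity hρ hσ).symm

/-- Explicit Uhlmann partial isometry: for unit vectors `ψ, φ` on `ℂ^{d_A}⊗ℂ^{d_B}` with reduced
states `ρ = Tr_B |ψ⟩⟨ψ|`, `σ = Tr_B |φ⟩⟨φ|`, and `K = Tr_A |ψ⟩⟨φ|` with singular value
decomposition `K = U Σ V†`, the operator `W = U sgn(Σ) V†` is a partial isometry and
`⟨ψ|(I⊗W)|φ⟩ = F(ρ,σ)`. -/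
theorem uhlmann_explicit (dA dB : ℕ) (hdA : 1 ≤ dA) (hdB : 1 ≤ dB)
    (ψ φ : Fin dA × Fin dB → ℂ) (hψ : evnorm ψ = 1) (hφ : evnorm φ = 1)
    (ρ σ : Matrix (Fin dA) (Fin dA) ℂ)
    (hρdef : ρ = ptraceB (outer ψ ψ)) (hσdef : σ = ptraceB (outer φ φ))
    (K : Matrix (Fin dB) (Fin dB) ℂ) (hKdef : K = ptraceA (outer ψ φ))
    (U V : Matrix (Fin dB) (Fin dB) ℂ)
    (hU : U ∈ Matrix.unitaryGroup (Fin dB) ℂ) (hV : V ∈ Matrix.unitaryGroup (Fin dB) ℂ)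
    (s : Fin dB → ℝ) (hs : ∀ i, 0 ≤ s i)
    (hSVD : K = U * Matrix.diagonal (fun i => (s i : ℂ)) * Vᴴ)
    (W : Matrix (Fin dB) (Fin dB) ℂ)
    (hW : W = U * Matrix.diagonal (fun i => (Real.sign (s i) : ℂ)) * Vᴴ) :
    (Wᴴ * W) * (Wᴴ * W) = Wᴴ * W ∧ (Wᴴ * W).IsHermitian ∧
      ∀ (hρ : ρ.PosSemidef) (hσ : σ.PosSemidef),
        star ψ ⬝ᵥ (((1 : Matrix (Fin dA) (Fin dA) ℂ) ⊗ₖ W) *ᵥ φ) = (fidelity hρ hσ : ℂ) :=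
  uhlmann_explicit_general dA dB ψ φ ρ σ hρdef hσdef K hKdef U V hU hV s hs hSVD W hW
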